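/- Let β be a mixed base, m ≥ 1, and let 𝒞 ⊆ ℕ^m be a set satisfying: for all X ∈ ℕ^m and all h < σ_β(X), there is C ∈ 𝒞 with X - C ∈ ℕ^m and σ_β(X - C) = h (adequate covering). Let X ∈ ℕ^m, n = σ_β(X), h ≠ n, and N = max{L : n_L ≠ h_L}. If Σ_i x^i_N ≥ β_N - 1, then there is C ∈ 𝒞 with X - C ∈ ℕ^m and σ_β(X - C) = h. -/

import Mathlib

open scoped BigOperators

/-- β̂_L = β_0 ⋯ β_{L-1}, the place value of digit L in mixed base β. -/
def bhat (β : ℕ → ℕ) (L : ℕ) : ℕ := ∏ i ∈ Finset.range L, β i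

/-- The L-th digit of n in the mixed base β. -/
def mdigit (β : ℕ → ℕ) (n L : ℕ) : ℕ := n / bhat β L % β L

/-- Digit-wise addition modulo β_L in mixed base β. -/
def moplus (β : ℕ → ℕ) (n h : ℕ) : ℕ :=
  ∑ L ∈ Finset.range (n + h + 1), ((mdigit β n L + mdigit β h L) % β L) * bhat β L

/-- Digit-wise subtraction modulo β_L in mixed base β. -/
def mominus (β : ℕ → ℕ) (n h : ℕ) : ℕ :=
  ∑ L ∈ Finset.range (n + h + 1), ((β L + mdigit β n L - mdigit β h L) % β L) * bhat β L

/-- σ_β(X) = x^0 ⊕ ⋯ ⊕ x^{m-1}: the digit-wise Nim sum in mixed base β. -/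
def msigma (β : ℕ → ℕ) {m : ℕ} (X : Fin m → ℕ) : ℕ :=
  ∑ L ∈ Finset.range (∑ i, X i + 1), ((∑ i, mdigit β (X i) L) % β L) * bhat β L

/-- Hamming weight: number of nonzero components. -/
def hamwt {m : ℕ} (C : Fin m → ℕ) : ℕ := (Finset.univ.filter (fun i => C i ≠ 0)).card

/-- ord_β(n): the largest L with β̂_L ∣ n (⊤ for n = 0). -/
def mord (β : ℕ → ℕ) (n : ℕ) : ℕ∞ :=
  if n = 0 then ⊤ else (Nat.findGreatest (fun L => bhat β L ∣ n) n : ℕ∞)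

/-- 𝒞 is a Sprague-Grundy system of σ_β: its members are nonzero moves and
σ_β satisfies the mex recursion of the take-away game Γ(ℕ^m, 𝒞), i.e. σ_β is the
Sprague-Grundy function of that game. -/
def IsSGSystem (β : ℕ → ℕ) {m : ℕ} (𝒞 : Set (Fin m → ℕ)) : Prop :=
  (∀ C ∈ 𝒞, C ≠ 0) ∧
  ∀ X : Fin m → ℕ, msigma β X =
    sInf {n : ℕ | ∀ C ∈ 𝒞, (∀ i, C i ≤ X i) → msigma β (fun i => X i - C i) ≠ n}

/-!
Choose `e i ≤ x^i_N` with `∑ e i = β_N - 1` and let `Y i` keep the digits of `X i` below `N`,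
have digit `e i` at `N` and none above, so that digit `N` of `σ_β(Y)` is `β_N - 1`. Let `t` agree
with `h` below `N` and have at `N` the digit that the excess `∑ x^i_N - (β_N - 1)` shifts to
`h_N`; as `h_N ≠ n_N`, this digit is below `β_N - 1`, so `t < σ_β(Y)` and covering `Y` at `t` gives
`C ≤ Y ≤ X`. Removing `C` cannot raise digit `N` of `Y i` above `e i`, so adding back `X i - Y i`
causes no carry: `X - C` has the low digits of `Y - C`, the high digits of `X`, and at `N` the
digits of `Y - C` plus the excess in total. Hence `σ_β(X - C) = h`.
-/

open Finset

section MixedRadix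

variable {β : ℕ → ℕ}

lemma bhat_succ (β : ℕ → ℕ) (L : ℕ) : bhat β (L + 1) = bhat β L * β L :=
  prod_range_succ β L

lemma bhat_pos (hβ : ∀ L, 0 < β L) (L : ℕ) : 0 < bhat β L :=
  prod_pos fun i _ => hβ i

lemma bhat_dvd_bhat (β : ℕ → ℕ) {R L : ℕ} (h : R ≤ L) : bhat β R ∣ bhat β L :=
  prod_dvd_prod_of_subset _ _ _ (range_subset_range.mpr h)

lemma bhat_mono (hβ : ∀ L, 0 < β L) {R L : ℕ} (h : R ≤ L) : bhat β R ≤ bhat β L :=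
  Nat.le_of_dvd (bhat_pos hβ L) (bhat_dvd_bhat β h)

lemma lt_bhat (hβ : ∀ L, 2 ≤ β L) {x L : ℕ} (h : x < L) : x < bhat β L := by
  suffices ∀ L, L < bhat β L from h.trans (this L)
  intro L
  induction L with
  | zero => simp [bhat]
  | succ L ih => rw [bhat_succ]; nlinarith [hβ L]

lemma mdigit_lt (hβ : ∀ L, 0 < β L) (x L : ℕ) : mdigit β x L < β L :=
  Nat.mod_lt _ (hβ L)

lemma mdigit_mul_bhat_le (x L : ℕ) : mdigit β x L * bhat β L ≤ x :=
  (Nat.mul_le_mul_right _ (Nat.mod_le _ _)).trans (Nat.div_mul_le_self x _)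

lemma mdigit_eq_zero_of_lt {x L : ℕ} (h : x < bhat β L) : mdigit β x L = 0 := by
  rw [mdigit, Nat.div_eq_of_lt h, Nat.zero_mod]

lemma mdigit_eq_mod_div (x L : ℕ) : mdigit β x L = x % bhat β (L + 1) / bhat β L := by
  rw [bhat_succ, Nat.mod_mul_right_div_self, mdigit]

lemma mdigit_eq_of_mod_bhat_eq {x y L R : ℕ} (hLR : L < R)
    (h : x % bhat β R = y % bhat β R) : mdigit β x L = mdigit β y L := by
  have hdvd := bhat_dvd_bhat β hLR
  rw [mdigit_eq_mod_div, mdigit_eq_mod_div, ← Nat.mod_mod_of_dvd x hdvd,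
    ← Nat.mod_mod_of_dvd y hdvd, h]

lemma mdigit_eq_of_div_bhat_eq {x y L R : ℕ} (hRL : R ≤ L)
    (h : x / bhat β R = y / bhat β R) : mdigit β x L = mdigit β y L := by
  obtain ⟨P, hP⟩ := bhat_dvd_bhat β hRL
  simp only [mdigit, hP, ← Nat.div_div_eq_div_mul, h]

lemma mdigit_add_mul_bhat (a k : ℕ) {L R : ℕ} (hLR : L < R) :
    mdigit β (a + k * bhat β R) L = mdigit β a L :=
  mdigit_eq_of_mod_bhat_eq hLR (Nat.add_mul_mod_self_right a k _)

lemma mdigit_add_mul_bhat_self (hβ : ∀ L, 0 < β L) {a R : ℕ} (k : ℕ) (ha : a < bhat β R) :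
    mdigit β (a + k * bhat β R) R = k % β R := by
  rw [mdigit, Nat.add_mul_div_right _ _ (bhat_pos hβ R), Nat.div_eq_of_lt ha, zero_add]

lemma div_bhat_eq_mdigit_add (x N : ℕ) :
    x / bhat β N = mdigit β x N + β N * (x / bhat β (N + 1)) := by
  rw [bhat_succ, ← Nat.div_div_eq_div_mul, mdigit, Nat.mod_add_div]

lemma mod_bhat_succ (x R : ℕ) :
    x % bhat β (R + 1) = x % bhat β R + bhat β R * mdigit β x R := by
  rw [bhat_succ, Nat.mod_mul, mdigit]

lemma eq_of_mdigit_eq (hβ : ∀ L, 2 ≤ β L) {a b : ℕ}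
    (h : ∀ L, mdigit β a L = mdigit β b L) : a = b := by
  have hmod : ∀ R, a % bhat β R = b % bhat β R := by
    intro R
    induction R with
    | zero => simp [bhat, Nat.mod_one]
    | succ R ih => rw [mod_bhat_succ, mod_bhat_succ, ih, h]
  calc a = a % bhat β (a + b + 1) := (Nat.mod_eq_of_lt (lt_bhat hβ (by omega))).symm
    _ = b % bhat β (a + b + 1) := hmod _
    _ = b := Nat.mod_eq_of_lt (lt_bhat hβ (by omega))

lemma sum_mul_bhat_lt {c : ℕ → ℕ} (hc : ∀ L, c L < β L) (R : ℕ) :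
    ∑ L ∈ range R, c L * bhat β L < bhat β R := by
  induction R with
  | zero => simp [bhat]
  | succ R ih =>
    rw [sum_range_succ, bhat_succ]
    calc ∑ L ∈ range R, c L * bhat β L + c R * bhat β R
        < (c R + 1) * bhat β R := by rw [add_one_mul]; omega
      _ ≤ bhat β R * β R := by rw [mul_comm]; exact Nat.mul_le_mul_left _ (hc R)

lemma mdigit_sum_mul_bhat {c : ℕ → ℕ} (hc : ∀ L, c L < β L) (R K : ℕ) :
    mdigit β (∑ L ∈ range R, c L * bhat β L) K = if K < R then c K else 0 := by
  have hβ : ∀ L, 0 < β L := fun L => (Nat.zero_le _).trans_lt (hc L)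
  induction R with
  | zero => simp [mdigit]
  | succ R ih =>
    rcases lt_trichotomy K R with hK | rfl | hK
    · rw [sum_range_succ, mdigit_add_mul_bhat _ _ hK, ih, if_pos hK, if_pos (by omega)]
    · rw [sum_range_succ, mdigit_add_mul_bhat_self hβ _ (sum_mul_bhat_lt hc K),
        Nat.mod_eq_of_lt (hc K), if_pos (by omega)]
    · rw [if_neg (by omega)]
      exact mdigit_eq_zero_of_lt ((sum_mul_bhat_lt hc _).trans_le (bhat_mono hβ hK))

lemma mdigit_msigma (hβ : ∀ L, 2 ≤ β L) {m : ℕ} (Z : Fin m → ℕ) (K : ℕ) :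
    mdigit β (msigma β Z) K = (∑ i, mdigit β (Z i) K) % β K := by
  rw [msigma, mdigit_sum_mul_bhat (fun L => Nat.mod_lt _ (by linarith [hβ L]))]
  split_ifs with hK
  · rfl
  · have hZ : ∀ i, mdigit β (Z i) K = 0 := fun i =>
      mdigit_eq_zero_of_lt ((single_le_sum (fun j _ => Nat.zero_le (Z j)) (mem_univ i)).trans_lt
        (lt_bhat hβ (by omega)))
    simp [hZ]

end MixedRadix

section Truncation

variable {β : ℕ → ℕ}

def truncDigit (β : ℕ → ℕ) (x N e : ℕ) : ℕ := x % bhat β N + e * bhat β N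

lemma truncDigit_le {x N e : ℕ} (he : e ≤ x / bhat β N) : truncDigit β x N e ≤ x := by
  have := Nat.mul_le_mul_right (bhat β N) he
  have := Nat.mod_add_div' x (bhat β N)
  unfold truncDigit
  omega

lemma truncDigit_lt (hβ : ∀ L, 0 < β L) (x N e : ℕ) :
    truncDigit β x N e < (e + 1) * bhat β N := by
  have := Nat.mod_lt x (bhat_pos hβ N)
  rw [truncDigit, add_one_mul]
  omega

lemma mdigit_truncDigit_of_lt {x N e L : ℕ} (hL : L < N) :
    mdigit β (truncDigit β x N e) L = mdigit β x L := by
  rw [truncDigit, mdigit_add_mul_bhat _ _ hL, mdigit_eq_of_mod_bhat_eq hL (Nat.mod_mod _ _)]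

lemma mdigit_truncDigit_self (hβ : ∀ L, 0 < β L) (x : ℕ) {N e : ℕ} (he : e < β N) :
    mdigit β (truncDigit β x N e) N = e := by
  rw [truncDigit, mdigit_add_mul_bhat_self hβ _ (Nat.mod_lt _ (bhat_pos hβ N)),
    Nat.mod_eq_of_lt he]

lemma sub_eq_truncDigit_sub_add {x c N e : ℕ} (he : e ≤ x / bhat β N)
    (hc : c ≤ truncDigit β x N e) :
    x - c = (truncDigit β x N e - c) + (x / bhat β N - e) * bhat β N := by
  have := Nat.mul_le_mul_right (bhat β N) he
  have := Nat.mod_add_div' x (bhat β N)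
  rw [Nat.sub_mul]
  unfold truncDigit at *
  omega

lemma truncDigit_sub_div_le (hβ : ∀ L, 0 < β L) (x c N e : ℕ) :
    (truncDigit β x N e - c) / bhat β N ≤ e :=
  Nat.le_of_lt_succ <| (Nat.div_lt_iff_lt_mul (bhat_pos hβ N)).mpr <|
    (Nat.sub_le _ _).trans_lt (truncDigit_lt hβ x N e)

lemma div_bhat_sub_of_le_truncDigit (hβ : ∀ L, 0 < β L) {x c N e : ℕ} (he : e ≤ mdigit β x N)
    (hc : c ≤ truncDigit β x N e) :
    (x - c) / bhat β N
      = ((truncDigit β x N e - c) / bhat β N + (mdigit β x N - e))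
        + β N * (x / bhat β (N + 1)) := by
  have hq := truncDigit_sub_div_le hβ x c N e
  rw [sub_eq_truncDigit_sub_add (he.trans (Nat.mod_le _ _)) hc,
    Nat.add_mul_div_right _ _ (bhat_pos hβ N), div_bhat_eq_mdigit_add x N]
  omega

lemma mdigit_sub_of_le_truncDigit_of_lt {x c N e L : ℕ} (he : e ≤ x / bhat β N)
    (hc : c ≤ truncDigit β x N e) (hL : L < N) :
    mdigit β (x - c) L = mdigit β (truncDigit β x N e - c) L := by
  rw [sub_eq_truncDigit_sub_add he hc, mdigit_add_mul_bhat _ _ hL]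

lemma mdigit_sub_of_le_truncDigit_self (hβ : ∀ L, 0 < β L) {x c N e : ℕ}
    (he : e ≤ mdigit β x N) (hc : c ≤ truncDigit β x N e) :
    mdigit β (x - c) N = mdigit β (truncDigit β x N e - c) N + (mdigit β x N - e) := by
  have hq := truncDigit_sub_div_le hβ x c N e
  have hd := mdigit_lt hβ x N
  have hqd : mdigit β (truncDigit β x N e - c) N = (truncDigit β x N e - c) / bhat β N :=
    Nat.mod_eq_of_lt (by omega)
  rw [hqd, mdigit, div_bhat_sub_of_le_truncDigit hβ he hc, Nat.add_mul_mod_self_left,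
    Nat.mod_eq_of_lt (by omega)]

lemma mdigit_sub_of_le_truncDigit_of_gt (hβ : ∀ L, 0 < β L) {x c N e L : ℕ}
    (he : e ≤ mdigit β x N) (hc : c ≤ truncDigit β x N e) (hL : N < L) :
    mdigit β (x - c) L = mdigit β x L := by
  have hq := truncDigit_sub_div_le hβ x c N e
  have hd := mdigit_lt hβ x N
  refine mdigit_eq_of_div_bhat_eq (R := N + 1) hL ?_
  rw [bhat_succ, ← Nat.div_div_eq_div_mul, div_bhat_sub_of_le_truncDigit hβ he hc,
    Nat.add_mul_div_left _ _ (hβ N), Nat.div_eq_of_lt (by omega), zero_add, bhat_succ]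

end Truncation

lemma Finset.exists_le_sum_eq_of_le {ι : Type*} [DecidableEq ι] (s : Finset ι) (f : ι → ℕ)
    {t : ℕ} (ht : t ≤ ∑ i ∈ s, f i) : ∃ e : ι → ℕ, (∀ i, e i ≤ f i) ∧ ∑ i ∈ s, e i = t := by
  induction s using Finset.induction_on generalizing t with
  | empty => exact ⟨0, fun _ => Nat.zero_le _, by simp_all⟩
  | insert a s ha ih =>
    rw [sum_insert ha] at ht
    obtain ⟨e, hef, hes⟩ := ih (t := t - min t (f a)) (by omega)
    refine ⟨Function.update e a (min t (f a)), fun i => ?_, ?_⟩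
    · rcases eq_or_ne i a with rfl | hi
      · simp
      · simpa [hi] using hef i
    · rw [sum_insert ha, Function.update_self, sum_update_of_notMem ha, hes]
      omega

lemma exists_mod_add_eq {b s h : ℕ} (hh : h < b) (hs : (s + (b - 1)) % b ≠ h) :
    ∃ t < b - 1, ∀ A, A % b = t → (A + s) % b = h := by
  -- `(b - 1) * s ≡ -s [MOD b]`
  have hmod : ∀ A, A % b = (h + (b - 1) * s) % b → (A + s) % b = h := by
    intro A hA
    rw [Nat.add_mod, hA, ← Nat.add_mod, add_assoc, ← add_one_mul, Nat.sub_add_cancel (by omega),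
      Nat.add_mul_mod_self_left, Nat.mod_eq_of_lt hh]
  refine ⟨(h + (b - 1) * s) % b, ?_, hmod⟩
  have hne : (h + (b - 1) * s) % b ≠ b - 1 := fun heq =>
    hs (by rw [add_comm]; exact hmod (b - 1) (by rw [Nat.mod_eq_of_lt (by omega), heq]))
  have := Nat.mod_lt (h + (b - 1) * s) (by omega : 0 < b)
  omega

theorem stmt9_general (β : ℕ → ℕ) (hβ : ∀ L, 2 ≤ β L) {m : ℕ}
    (𝒞 : Set (Fin m → ℕ))
    (hcov : ∀ X : Fin m → ℕ, ∀ h < msigma β X,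
      ∃ C ∈ 𝒞, (∀ i, C i ≤ X i) ∧ msigma β (fun i => X i - C i) = h)
    (X : Fin m → ℕ) (n h N : ℕ) (hn : n = msigma β X)
    (hN : mdigit β n N ≠ mdigit β h N)
    (hNmax : ∀ L, N < L → mdigit β n L = mdigit β h L)
    (hsum : β N - 1 ≤ ∑ i, mdigit β (X i) N) :
    ∃ C ∈ 𝒞, (∀ i, C i ≤ X i) ∧ msigma β (fun i => X i - C i) = h := by
  have hβ0 : ∀ L, 0 < β L := fun L => by linarith [hβ L]
  obtain ⟨e, he, hesum⟩ := exists_le_sum_eq_of_le univ (fun i => mdigit β (X i) N) hsum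
  set Y : Fin m → ℕ := fun i => truncDigit β (X i) N (e i)
  have hYN : mdigit β (msigma β Y) N = β N - 1 := by
    rw [mdigit_msigma hβ, sum_congr rfl fun i _ =>
      mdigit_truncDigit_self hβ0 _ ((he i).trans_lt (mdigit_lt hβ0 _ _)), hesum,
      Nat.mod_eq_of_lt (Nat.sub_lt (hβ0 N) one_pos)]
  obtain ⟨tN, htN, hcarry⟩ := exists_mod_add_eq (s := ∑ i, mdigit β (X i) N - (β N - 1))
    (mdigit_lt hβ0 h N) (by rwa [Nat.sub_add_cancel hsum, ← mdigit_msigma hβ, ← hn])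
  have ht : truncDigit β h N tN < msigma β Y :=
    calc truncDigit β h N tN < (tN + 1) * bhat β N := truncDigit_lt hβ0 h N tN
      _ ≤ mdigit β (msigma β Y) N * bhat β N := by rw [hYN]; gcongr; omega
      _ ≤ msigma β Y := mdigit_mul_bhat_le _ _
  obtain ⟨C, hC, hCY, hσ⟩ := hcov Y _ ht
  refine ⟨C, hC, fun i => (hCY i).trans (truncDigit_le ((he i).trans (Nat.mod_le _ _))),
    eq_of_mdigit_eq hβ fun L => ?_⟩
  rw [mdigit_msigma hβ]
  rcases lt_trichotomy L N with hL | rfl | hL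
  · simp only [mdigit_sub_of_le_truncDigit_of_lt ((he _).trans (Nat.mod_le _ _)) (hCY _) hL]
    rw [← mdigit_msigma hβ, hσ, mdigit_truncDigit_of_lt hL]
  · rw [sum_congr rfl fun i _ => mdigit_sub_of_le_truncDigit_self hβ0 (he i) (hCY i),
      sum_add_distrib, sum_tsub_distrib _ fun i _ => he i, hesum]
    exact hcarry _ (by rw [← mdigit_msigma hβ, hσ, mdigit_truncDigit_self hβ0 h (by omega)])
  · rw [sum_congr rfl fun i _ => mdigit_sub_of_le_truncDigit_of_gt hβ0 (he i) (hCY i) hL,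
      ← mdigit_msigma hβ, ← hn, hNmax L hL]

/-- If 𝒞 adequately covers and Σ_i x^i_N ≥ β_N - 1, then 𝒞 covers X at h even
when h > n, where N is the top digit where n and h differ. -/
theorem stmt9 (β : ℕ → ℕ) (hβ : ∀ L, 2 ≤ β L) {m : ℕ} (hm : 1 ≤ m)
    (𝒞 : Set (Fin m → ℕ))
    (hcov : ∀ X : Fin m → ℕ, ∀ h < msigma β X,
      ∃ C ∈ 𝒞, (∀ i, C i ≤ X i) ∧ msigma β (fun i => X i - C i) = h)
    (X : Fin m → ℕ) (n h N : ℕ) (hn : n = msigma β X) (hne : h ≠ n)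
    (hN : mdigit β n N ≠ mdigit β h N)
    (hNmax : ∀ L, N < L → mdigit β n L = mdigit β h L)
    (hsum : β N - 1 ≤ ∑ i, mdigit β (X i) N) :
    ∃ C ∈ 𝒞, (∀ i, C i ≤ X i) ∧ msigma β (fun i => X i - C i) = h :=
  stmt9_general β hβ 𝒞 hcov X n h N hn hN hNmax hsum
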